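/- Explicit solution of the one-dimensional problem: Let c > 0 and define ψ_c : ℝ → ℝ by ψ_c(x) = 0 for x ≤ −1/(4c), ψ_c(x) = c·(x + 1/(4c))² for −1/(4c) < x < 1/(4c), and ψ_c(x) = x for x ≥ 1/(4c). Then ψ_c is continuously differentiable on ℝ and is a viscosity solution of min{−(1/2)u'' + c, u − max{x, 0}} = 0 on ℝ (the case d = 1 of the obstacle problem with obstacle g(x) = max{x, 0}). -/

import Mathlib

open Filter

noncomputable def psi (c : ℝ) (x : ℝ) : ℝ :=
  if x ≤ -(1 / (4 * c)) then 0
  else if x < 1 / (4 * c) then c * (x + 1 / (4 * c)) ^ 2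
  else x

def IsVSubsol1 (c : ℝ) (ψ u : ℝ → ℝ) : Prop :=
  ∀ x₀ : ℝ, ψ x₀ < u x₀ →
    ∀ φ : ℝ → ℝ, ContDiff ℝ 2 φ → φ x₀ = u x₀ →
      (∀ᶠ x in nhds x₀, u x ≤ φ x) → -(1 / 2 : ℝ) * iteratedDeriv 2 φ x₀ + c ≤ 0

def IsVSupersol1 (c : ℝ) (ψ u : ℝ → ℝ) : Prop :=
  (∀ x, ψ x ≤ u x) ∧
  ∀ x₀ : ℝ, ∀ φ : ℝ → ℝ, ContDiff ℝ 2 φ → φ x₀ = u x₀ →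
    (∀ᶠ x in nhds x₀, φ x ≤ u x) → 0 ≤ -(1 / 2 : ℝ) * iteratedDeriv 2 φ x₀ + c

def IsVSol1 (c : ℝ) (ψ u : ℝ → ℝ) : Prop :=
  IsVSubsol1 c ψ u ∧ IsVSupersol1 c ψ u

/-!
With `a = 1 / (4c)` one has `ψ_c x = c ((x + a)₊² - (x - a)₊²)`. The function `y ↦ y₊²` lies above
each of its tangent lines, and above them by at most `(y - y₀)²`, so `ψ_c` differs from its tangent
line at `x₀` by at most `c (x - x₀)²`. This makes `ψ_c` of class `C¹` and puts it below a parabola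
of curvature `2c` touching at `x₀`, so a smooth `φ` touching `ψ_c` from below has `φ'' ≤ 2c`.
Off the contact set, i.e. on `(-a, a)`, `ψ_c` is such a parabola, so a smooth `φ` touching it from
above has `φ'' ≥ 2c`.
-/

open Set Topology

theorem IsLocalMax.deriv_deriv_nonpos {f : ℝ → ℝ} {x₀ : ℝ} (h : IsLocalMax f x₀)
    (hf : ContinuousAt f x₀) : deriv (deriv f) x₀ ≤ 0 := by
  by_contra! hpos
  -- a positive second derivative would make `x₀` a local minimum too, so `f` is locally constant
  have hconst : f =ᶠ[𝓝 x₀] fun _ => f x₀ :=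
    (h.and (isLocalMin_of_deriv_deriv_pos hpos h.deriv_eq_zero hf)).mono
      fun _ hx => le_antisymm hx.1 hx.2
  simp [hconst.deriv.deriv_eq] at hpos

theorem iteratedDeriv_two_le_of_eventuallyLE {f g : ℝ → ℝ} {x₀ : ℝ} (hf : ContDiff ℝ 2 f)
    (hg : ContDiff ℝ 2 g) (hfg : f ≤ᶠ[𝓝 x₀] g) (heq : f x₀ = g x₀) :
    iteratedDeriv 2 f x₀ ≤ iteratedDeriv 2 g x₀ := by
  have hmax : IsLocalMax (f - g) x₀ := hfg.mono fun x hx => by simp [heq, hx]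
  rw [← sub_nonpos, ← iteratedDeriv_sub hf.contDiffAt hg.contDiffAt, iteratedDeriv_succ,
    iteratedDeriv_one]
  exact hmax.deriv_deriv_nonpos (hf.sub hg).continuous.continuousAt

theorem hasDerivAt_of_abs_sub_le_mul_sq {f : ℝ → ℝ} {f' x₀ C : ℝ}
    (h : ∀ x, |f x - f x₀ - f' * (x - x₀)| ≤ C * (x - x₀) ^ 2) : HasDerivAt f f' x₀ := by
  refine .of_isLittleO (Asymptotics.IsBigO.trans_isLittleO (g := fun x => ‖x - x₀‖ ^ 2) ?_
    (Asymptotics.isLittleO_pow_sub_sub x₀ one_lt_two))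
  refine Asymptotics.IsBigO.of_bound C (Eventually.of_forall fun x => ?_)
  simpa [mul_comm] using h x

def parabola (x₀ a b c x : ℝ) : ℝ := a + b * (x - x₀) + c * (x - x₀) ^ 2

theorem parabola_self (x₀ a b c : ℝ) : parabola x₀ a b c x₀ = a := by
  simp [parabola]

theorem contDiff_parabola (x₀ a b c : ℝ) {n : WithTop ℕ∞} : ContDiff ℝ n (parabola x₀ a b c) := by
  unfold parabola
  fun_prop

theorem hasDerivAt_parabola (x₀ a b c x : ℝ) :
    HasDerivAt (parabola x₀ a b c) (b + 2 * c * (x - x₀)) x := by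
  have h := (hasDerivAt_id' x).sub_const x₀
  exact (((h.const_mul b).const_add a).add ((h.pow 2).const_mul c)).congr_deriv (by ring)

theorem iteratedDeriv_two_parabola (x₀ a b c x : ℝ) :
    iteratedDeriv 2 (parabola x₀ a b c) x = 2 * c := by
  rw [iteratedDeriv_succ, iteratedDeriv_one,
    funext fun y => (hasDerivAt_parabola x₀ a b c y).deriv]
  exact (((hasDerivAt_id' x).sub_const x₀).const_mul (2 * c) |>.const_add b).deriv.trans (by ring)

theorem max_zero_sq_sub_tangent_mem_Icc (y y₀ : ℝ) :
    max y 0 ^ 2 - max y₀ 0 ^ 2 - 2 * max y₀ 0 * (y - y₀) ∈ Icc 0 ((y - y₀) ^ 2) := by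
  rcases le_total y 0 with hy | hy <;> rcases le_total y₀ 0 with hy₀ | hy₀ <;>
    simp only [max_eq_right, max_eq_left, hy, hy₀, mem_Icc] <;>
    constructor <;> nlinarith [sq_nonneg (y - y₀), mul_self_nonneg y, mul_self_nonneg y₀]

section Psi

variable {c : ℝ}

noncomputable def psiDeriv (c x : ℝ) : ℝ :=
  2 * c * (max (x + 1 / (4 * c)) 0 - max (x - 1 / (4 * c)) 0)

theorem psi_eq_sq_max (hc : 0 < c) (x : ℝ) :
    psi c x = c * (max (x + 1 / (4 * c)) 0 ^ 2 - max (x - 1 / (4 * c)) 0 ^ 2) := by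
  have ha : 0 < 1 / (4 * c) := by positivity
  unfold psi
  split_ifs with h₁ h₂
  · rw [max_eq_right (by linarith), max_eq_right (by linarith)]
    ring
  · rw [max_eq_left (by linarith), max_eq_right (by linarith)]
    ring
  · rw [max_eq_left (by linarith), max_eq_left (by linarith)]
    field_simp
    ring

theorem abs_psi_sub_tangent_le (hc : 0 < c) (x x₀ : ℝ) :
    |psi c x - psi c x₀ - psiDeriv c x₀ * (x - x₀)| ≤ c * (x - x₀) ^ 2 := by
  obtain ⟨hu₀, hu₁⟩ := max_zero_sq_sub_tangent_mem_Icc (x + 1 / (4 * c)) (x₀ + 1 / (4 * c))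
  obtain ⟨hv₀, hv₁⟩ := max_zero_sq_sub_tangent_mem_Icc (x - 1 / (4 * c)) (x₀ - 1 / (4 * c))
  rw [add_sub_add_right_eq_sub] at hu₀ hu₁
  rw [sub_sub_sub_cancel_right] at hv₀ hv₁
  have hsplit : psi c x - psi c x₀ - psiDeriv c x₀ * (x - x₀) =
      c * ((max (x + 1 / (4 * c)) 0 ^ 2 - max (x₀ + 1 / (4 * c)) 0 ^ 2
          - 2 * max (x₀ + 1 / (4 * c)) 0 * (x - x₀))
        - (max (x - 1 / (4 * c)) 0 ^ 2 - max (x₀ - 1 / (4 * c)) 0 ^ 2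
          - 2 * max (x₀ - 1 / (4 * c)) 0 * (x - x₀))) := by
    rw [psi_eq_sq_max hc, psi_eq_sq_max hc, psiDeriv]
    ring
  rw [hsplit, abs_mul, abs_of_pos hc]
  exact mul_le_mul_of_nonneg_left (abs_sub_le_of_nonneg_of_le hu₀ hu₁ hv₀ hv₁) hc.le

theorem contDiff_one_psi (hc : 0 < c) : ContDiff ℝ 1 (psi c) := by
  have hderiv x := hasDerivAt_of_abs_sub_le_mul_sq (abs_psi_sub_tangent_le hc · x)
  rw [contDiff_one_iff_deriv, funext fun x => (hderiv x).deriv]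
  exact ⟨fun x => (hderiv x).differentiableAt, by unfold psiDeriv; fun_prop⟩

theorem psi_le_parabola (hc : 0 < c) (x₀ x : ℝ) :
    psi c x ≤ parabola x₀ (psi c x₀) (psiDeriv c x₀) c x := by
  have := (abs_le.mp (abs_psi_sub_tangent_le hc x x₀)).2
  unfold parabola
  linarith

theorem psi_eq_parabola_of_mem_Ioo {x₀ x : ℝ} (hx₀ : x₀ ∈ Ioo (-(1 / (4 * c))) (1 / (4 * c)))
    (hx : x ∈ Ioo (-(1 / (4 * c))) (1 / (4 * c))) :
    psi c x = parabola x₀ (psi c x₀) (psiDeriv c x₀) c x := by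
  have hmid : ∀ y ∈ Ioo (-(1 / (4 * c))) (1 / (4 * c)), psi c y = c * (y + 1 / (4 * c)) ^ 2 :=
    fun y hy => by rw [psi, if_neg (not_le.mpr hy.1), if_pos hy.2]
  rw [hmid x hx, hmid x₀ hx₀, parabola, psiDeriv, max_eq_left (by linarith [hx₀.1]),
    max_eq_right (by linarith [hx₀.2])]
  ring

theorem max_le_psi (hc : 0 < c) (x : ℝ) : max x 0 ≤ psi c x := by
  have ha : 0 < 1 / (4 * c) := by positivity
  unfold psi
  split_ifs with h₁ h₂
  · exact max_le (by linarith) le_rfl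
  · -- `c (x + a)² - x = c (x - a)²` because `4 c a = 1`
    refine max_le ?_ (by positivity)
    nlinarith [mul_nonneg hc.le (sq_nonneg (x - 1 / (4 * c))),
      mul_one_div_cancel (by positivity : 4 * c ≠ 0)]
  · exact max_le le_rfl (by linarith)

theorem mem_Ioo_of_max_lt_psi {x : ℝ} (h : max x 0 < psi c x) :
    x ∈ Ioo (-(1 / (4 * c))) (1 / (4 * c)) := by
  unfold psi at h
  split_ifs at h with h₁ h₂
  · exact absurd h (not_lt.mpr (le_max_right x 0))
  · exact ⟨not_le.mp h₁, h₂⟩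
  · exact absurd h (not_lt.mpr (le_max_left x 0))

end Psi

/-- Explicit solution of the one-dimensional problem. -/
theorem psi_is_solution (c : ℝ) (hc : 0 < c) :
    ContDiff ℝ 1 (psi c) ∧ IsVSol1 c (fun x => max x 0) (psi c) := by
  refine ⟨contDiff_one_psi hc, ?_, max_le_psi hc, ?_⟩
  · intro x₀ hlt φ hφ heq hle
    have hx₀ := mem_Ioo_of_max_lt_psi hlt
    have hpsi : psi c =ᶠ[𝓝 x₀] parabola x₀ (psi c x₀) (psiDeriv c x₀) c :=
      eventually_of_mem (Ioo_mem_nhds hx₀.1 hx₀.2) fun x hx => psi_eq_parabola_of_mem_Ioo hx₀ hx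
    have h2c := iteratedDeriv_two_le_of_eventuallyLE (contDiff_parabola ..) hφ
      (hpsi.symm.trans_le hle) (by rw [parabola_self, heq])
    rw [iteratedDeriv_two_parabola] at h2c
    linarith
  · intro x₀ φ hφ heq hle
    have h2c := iteratedDeriv_two_le_of_eventuallyLE hφ (contDiff_parabola ..)
      (EventuallyLE.trans hle (Eventually.of_forall (psi_le_parabola hc x₀)))
      (by rw [parabola_self, heq])
    rw [iteratedDeriv_two_parabola] at h2c
    linarith
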